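/- Let φ and ψ be modal CNF formulas, let σ be a consistent permutation of finite order (σⁿ is the identity for some n ≥ 1) that is a symmetry of φ, and let C be a class of pointed Kripke models closed under σ. Then φ ⊨_C ψ if and only if φ ⊨_C σ(ψ). -/

import Mathlib

namespace ModalSym

inductive Lit (Atom : Type) : Type
  | pos (a : Atom) : Lit Atom
  | neg (a : Atom) : Lit Atom
  deriving DecidableEq

namespace Lit
def flip {Atom : Type} : Lit Atom → Lit Atom
  | pos a => neg a
  | neg a => pos a
def atom {Atom : Type} : Lit Atom → Atom
  | pos a => a
  | neg a => a
end Lit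

/-- A permutation `σ` of literals is consistent when it commutes with negation. -/
def Consistent {Atom : Type} (σ : Lit Atom → Lit Atom) : Prop :=
  ∀ l, σ l.flip = (σ l).flip

/-- Modal CNF clauses of modal depth at most `n`: a clause is a finite set whose
elements are literals or modal literals `□ₘ C` / `¬□ₘ C` (`Bool` gives the polarity,
`true` for `□ₘ C`). -/
@[reducible] def ClauseT (Atom Mod : Type) : ℕ → Type
  | 0 => Finset (Lit Atom)
  | n+1 => Finset (Lit Atom ⊕ Bool × Mod × ClauseT Atom Mod n)

instance instDecEqClauseT {Atom Mod : Type} [DecidableEq Atom] [DecidableEq Mod] :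
    ∀ n, DecidableEq (ClauseT Atom Mod n)
  | 0 => inferInstanceAs (DecidableEq (Finset (Lit Atom)))
  | n+1 =>
    letI := instDecEqClauseT (Atom := Atom) (Mod := Mod) n
    inferInstanceAs (DecidableEq (Finset (Lit Atom ⊕ Bool × Mod × ClauseT Atom Mod n)))

/-- A modal CNF formula (of modal depth at most `n`): a finite set of clauses. -/
@[reducible] def FormT (Atom Mod : Type) (n : ℕ) : Type := Finset (ClauseT Atom Mod n)

/-- A pointed Kripke model. -/
structure KModel (Atom Mod : Type) : Type 1 where
  W : Type
  pt : W
  V : W → Set Atom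
  R : Mod → W → W → Prop

def satLit {Atom : Type} (S : Set Atom) : Lit Atom → Prop
  | .pos a => a ∈ S
  | .neg a => a ∉ S

def satClause {Atom Mod : Type} (M : KModel Atom Mod) :
    ∀ n, ClauseT Atom Mod n → M.W → Prop
  | 0, C, v => ∃ l ∈ C, satLit (M.V v) l
  | n+1, C, v => ∃ e ∈ C,
      match e with
      | Sum.inl l => satLit (M.V v) l
      | Sum.inr (b, m, C') =>
          cond b (∀ u, M.R m v u → satClause M n C' u)
                 (¬ ∀ u, M.R m v u → satClause M n C' u)

/-- `M ⊨ φ`. -/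
def satForm {Atom Mod : Type} (M : KModel Atom Mod) {n : ℕ} (φ : FormT Atom Mod n) : Prop :=
  ∀ C ∈ φ, satClause M n C M.pt

/-- `L_S`, the complete consistent set of literals generated by `S ⊆ Atom`. -/
def genLits {Atom : Type} (S : Set Atom) : Set (Lit Atom) := {l | satLit S l}

def permClause {Atom Mod : Type} [DecidableEq Atom] [DecidableEq Mod]
    (σ : Lit Atom → Lit Atom) : ∀ n, ClauseT Atom Mod n → ClauseT Atom Mod n
  | 0, C => C.image σ
  | n+1, C => C.image fun e =>
      match e with
      | Sum.inl l => Sum.inl (σ l)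
      | Sum.inr (b, m, C') => Sum.inr (b, m, permClause σ n C')

/-- The action `σ(φ)` of a permutation of literals on a modal CNF formula. -/
def permForm {Atom Mod : Type} [DecidableEq Atom] [DecidableEq Mod]
    (σ : Lit Atom → Lit Atom) {n : ℕ} (φ : FormT Atom Mod n) : FormT Atom Mod n :=
  φ.image (permClause σ n)

/-- The permuted model `σ(M)`, with `V'(v) = σ(L_{V(v)}) ∩ Atom`. -/
def permModel {Atom Mod : Type} (σ : Lit Atom → Lit Atom) (M : KModel Atom Mod) :
    KModel Atom Mod where
  W := M.W
  pt := M.pt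
  V := fun v => {a | Lit.pos a ∈ σ '' genLits (M.V v)}
  R := M.R

def IsBisim {Atom Mod : Type} (M M' : KModel Atom Mod) (Z : M.W → M'.W → Prop) : Prop :=
  Z M.pt M'.pt ∧
  (∀ v v', Z v v' → ∀ a, a ∈ M.V v ↔ a ∈ M'.V v') ∧
  (∀ v v' m u, Z v v' → M.R m v u → ∃ u', M'.R m v' u' ∧ Z u u') ∧
  (∀ v v' m u', Z v v' → M'.R m v' u' → ∃ u, M.R m v u ∧ Z u u')

def Bisimilar {Atom Mod : Type} (M M' : KModel Atom Mod) : Prop := ∃ Z, IsBisim M M' Z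

def IsSigmaSim {Atom Mod : Type} (σ : Lit Atom → Lit Atom) (M M' : KModel Atom Mod)
    (Z : M.W → M'.W → Prop) : Prop :=
  Z M.pt M'.pt ∧
  (∀ v v', Z v v' → ∀ l, l ∈ genLits (M.V v) ↔ σ l ∈ genLits (M'.V v')) ∧
  (∀ v v' m u, Z v v' → M.R m v u → ∃ u', M'.R m v' u' ∧ Z u u') ∧
  (∀ v v' m u', Z v v' → M'.R m v' u' → ∃ u, M.R m v u ∧ Z u u')

/-- `M ,→σ M'`. -/
def SigmaSim {Atom Mod : Type} (σ : Lit Atom → Lit Atom) (M M' : KModel Atom Mod) : Prop :=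
  ∃ Z, IsSigmaSim σ M M' Z

/-- `IsPathFrom M v p`: `p` is a valid path (list of (modality, state) steps) starting at `v`. -/
def IsPathFrom {Atom Mod : Type} (M : KModel Atom Mod) : M.W → List (Mod × M.W) → Prop
  | _, [] => True
  | v, s :: rest => M.R s.1 v s.2 ∧ IsPathFrom M s.2 rest

def pathLast {Atom Mod : Type} (M : KModel Atom Mod) : M.W → List (Mod × M.W) → M.W
  | v, [] => v
  | _, s :: rest => pathLast M s.2 rest

/-- A tree model: every state is the last state of exactly one rooted path. -/
def IsTree {Atom Mod : Type} (M : KModel Atom Mod) : Prop :=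
  ∀ v : M.W, ∃! p : List (Mod × M.W), IsPathFrom M M.pt p ∧ pathLast M M.pt p = v

/-- The depth of a state: the (minimal) length of a rooted path leading to it. -/
noncomputable def depth {Atom Mod : Type} (M : KModel Atom Mod) (v : M.W) : ℕ :=
  sInf {d | ∃ p, IsPathFrom M M.pt p ∧ pathLast M M.pt p = v ∧ p.length = d}

/-- The unravelling `T(M)`. -/
def unravel {Atom Mod : Type} (M : KModel Atom Mod) : KModel Atom Mod where
  W := {p : List (Mod × M.W) // IsPathFrom M M.pt p}
  pt := ⟨[], trivial⟩
  V := fun p => M.V (pathLast M M.pt p.1)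
  R := fun m p p' => ∃ v, p'.1 = p.1 ++ [(m, v)]

/-- `head(σ̄)`: the first permutation of the sequence, identity for the empty sequence. -/
def headP {Atom : Type} (σs : List (Lit Atom → Lit Atom)) : Lit Atom → Lit Atom :=
  σs.headD id

def lpermClause {Atom Mod : Type} [DecidableEq Atom] [DecidableEq Mod]
    (σs : List (Lit Atom → Lit Atom)) : ∀ n, ClauseT Atom Mod n → ClauseT Atom Mod n
  | 0, C => C.image (headP σs)
  | n+1, C => C.image fun e =>
      match e with
      | Sum.inl l => Sum.inl (headP σs l)
      | Sum.inr (b, m, C') => Sum.inr (b, m, lpermClause σs.tail n C')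

/-- The action `σ̄(φ)` of a permutation sequence on a modal CNF formula. -/
def lpermForm {Atom Mod : Type} [DecidableEq Atom] [DecidableEq Mod]
    (σs : List (Lit Atom → Lit Atom)) {n : ℕ} (φ : FormT Atom Mod n) : FormT Atom Mod n :=
  φ.image (lpermClause σs n)

/-- The layered permuted model `σ̄(M)` (meaningful on tree models):
at a state of depth `d` the permutation `head(σ̄_{d+1})` is used. -/
noncomputable def lpermModel {Atom Mod : Type} (σs : List (Lit Atom → Lit Atom))
    (M : KModel Atom Mod) : KModel Atom Mod where
  W := M.W
  pt := M.pt
  V := fun v => {a | Lit.pos a ∈ headP (σs.drop (depth M v)) '' genLits (M.V v)}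
  R := M.R

def IsLSim {Atom Mod : Type} (σs : List (Lit Atom → Lit Atom)) (M M' : KModel Atom Mod)
    (Z : ℕ → M.W → M'.W → Prop) : Prop :=
  Z 0 M.pt M'.pt ∧
  (∀ i v v', Z i v v' →
    ∀ l, l ∈ genLits (M.V v) ↔ headP (σs.drop i) l ∈ genLits (M'.V v')) ∧
  (∀ i v v' m u, Z i v v' → M.R m v u → ∃ u', M'.R m v' u' ∧ Z (i+1) u u') ∧
  (∀ i v v' m u', Z i v v' → M'.R m v' u' → ∃ u, M.R m v u ∧ Z (i+1) u u')

/-- `M ,→σ̄ M'`. -/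
def LSim {Atom Mod : Type} (σs : List (Lit Atom → Lit Atom)) (M M' : KModel Atom Mod) : Prop :=
  ∃ Z, IsLSim σs M M' Z

/-- `Mod_C(φ)`: the models in the class `𝒞` satisfying `φ`. -/
def ModC {Atom Mod : Type} (𝒞 : Set (KModel Atom Mod)) {n : ℕ} (φ : FormT Atom Mod n) :
    Set (KModel Atom Mod) := {M ∈ 𝒞 | satForm M φ}

/-- `φ ⊨_C ψ`. -/
def Entails {Atom Mod : Type} (𝒞 : Set (KModel Atom Mod)) {n₁ n₂ : ℕ}
    (φ : FormT Atom Mod n₁) (ψ : FormT Atom Mod n₂) : Prop :=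
  ModC 𝒞 φ ⊆ ModC 𝒞 ψ


/-! Since `σ` commutes with negation, permuting the valuation and the formula together preserves
truth: `σ(M) ⊨ σ(χ)` iff `M ⊨ χ`. As `σ(φ) = φ` and `𝒞` is closed under `σ`, this sends models of
`φ` in `𝒞` to models of `φ` in `𝒞`, which gives `⇐`. For `⇒`, a model `M` of `φ` is the image
under `σ` of `σ^(k-1)(M)`, again a model of `φ` in `𝒞`, because `σ^k = id`. -/

section Permutation

variable {Atom Mod : Type} {σ : Lit Atom → Lit Atom}

lemma satLit_flip (S : Set Atom) (l : Lit Atom) : satLit S l.flip ↔ ¬ satLit S l := by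
  cases l <;> simp [satLit, Lit.flip]

lemma satLit_permModel (hinj : Function.Injective σ) (hcons : Consistent σ) (S : Set Atom)
    (l : Lit Atom) : satLit {a | Lit.pos a ∈ σ '' genLits S} (σ l) ↔ satLit S l := by
  have mem_image : ∀ l, σ l ∈ σ '' genLits S ↔ satLit S l := fun l =>
    hinj.mem_set_image
  cases h : σ l with
  | pos a =>
    show Lit.pos a ∈ σ '' genLits S ↔ _
    rw [← h, mem_image]
  | neg a =>
    show Lit.pos a ∉ σ '' genLits S ↔ _
    rw [show Lit.pos a = σ l.flip by rw [hcons, h]; rfl, mem_image, satLit_flip, not_not]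

variable [DecidableEq Atom] [DecidableEq Mod]

lemma satClause_permModel_permClause (hinj : Function.Injective σ) (hcons : Consistent σ)
    (M : KModel Atom Mod) :
    ∀ (n : ℕ) (C : ClauseT Atom Mod n) (v : M.W),
      satClause (permModel σ M) n (permClause σ n C) v ↔ satClause M n C v
  | 0, C, v => by
    simp only [satClause, permClause, Finset.exists_mem_image]
    exact exists_congr fun l => and_congr_right' (satLit_permModel hinj hcons _ l)
  | n + 1, C, v => by
    simp only [satClause, permClause, Finset.exists_mem_image]
    refine exists_congr fun e => and_congr_right' ?_
    rcases e with l | ⟨_ | _, m, C'⟩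
    · exact satLit_permModel hinj hcons _ l
    · exact not_congr <| forall₂_congr fun u _ =>
        satClause_permModel_permClause hinj hcons M n C' u
    · exact forall₂_congr fun u _ => satClause_permModel_permClause hinj hcons M n C' u

lemma satForm_permModel_permForm (hinj : Function.Injective σ) (hcons : Consistent σ)
    (M : KModel Atom Mod) {n : ℕ} (χ : FormT Atom Mod n) :
    satForm (permModel σ M) (permForm σ χ) ↔ satForm M χ := by
  simp only [satForm, permForm, Finset.forall_mem_image]
  exact forall₂_congr fun C _ => satClause_permModel_permClause hinj hcons M n C M.pt

lemma satForm_iterate_permModel_permForm (hinj : Function.Injective σ) (hcons : Consistent σ)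
    (M : KModel Atom Mod) {n : ℕ} (χ : FormT Atom Mod n) (j : ℕ) :
    satForm ((permModel σ)^[j] M) ((permForm σ)^[j] χ) ↔ satForm M χ := by
  induction j with
  | zero => rfl
  | succ j ih =>
    rw [Function.iterate_succ_apply', Function.iterate_succ_apply',
      satForm_permModel_permForm hinj hcons, ih]

lemma permClause_comp (σ τ : Lit Atom → Lit Atom) :
    ∀ (n : ℕ) (C : ClauseT Atom Mod n),
      permClause σ n (permClause τ n C) = permClause (σ ∘ τ) n C
  | 0, C => by simp [permClause, Finset.image_image]
  | n + 1, C => by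
    simp only [permClause, Finset.image_image]
    refine Finset.image_congr ?_
    rintro (l | ⟨b, m, C'⟩) _
    · rfl
    · simp [permClause_comp σ τ n C']

lemma permClause_id : ∀ (n : ℕ) (C : ClauseT Atom Mod n), permClause id n C = C
  | 0, C => Finset.image_id
  | n + 1, C => by
    conv_rhs => rw [← Finset.image_id (s := C)]
    refine Finset.image_congr ?_
    rintro (l | ⟨b, m, C'⟩) _
    · rfl
    · simp [permClause_id n C']

lemma permForm_id {n : ℕ} (χ : FormT Atom Mod n) : permForm id χ = χ := by
  simp [permForm, funext (permClause_id (Atom := Atom) (Mod := Mod) n)]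

lemma iterate_permForm (σ : Lit Atom → Lit Atom) {n : ℕ} (χ : FormT Atom Mod n) (j : ℕ) :
    (permForm σ)^[j] χ = permForm σ^[j] χ := by
  induction j with
  | zero => exact (permForm_id χ).symm
  | succ j ih =>
    rw [Function.iterate_succ_apply', ih, Function.iterate_succ', permForm, permForm,
      Finset.image_image]
    exact Finset.image_congr fun C _ => permClause_comp σ σ^[j] n C

end Permutation

theorem entails_iff_entails_perm_general {Atom Mod : Type}
    [DecidableEq Atom] [DecidableEq Mod]
    {n₁ n₂ : ℕ} (φ : FormT Atom Mod n₁) (ψ : FormT Atom Mod n₂)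
    (σ : Lit Atom → Lit Atom) (hbij : Function.Bijective σ) (hcons : Consistent σ)
    (hord : ∃ k : ℕ, 1 ≤ k ∧ σ^[k] = id)
    (hsym : permForm σ φ = φ)
    (𝒞 : Set (KModel Atom Mod)) (hclosed : ∀ M ∈ 𝒞, permModel σ M ∈ 𝒞) :
    Entails 𝒞 φ ψ ↔ Entails 𝒞 φ (permForm σ ψ) := by
  have hinj := hbij.injective
  constructor
  · obtain ⟨_ | j, hk, hσk⟩ := hord
    · omega
    rintro h M ⟨hM, hMφ⟩
    have hNφ : satForm ((permModel σ)^[j] M) φ := by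
      rw [← (Function.IsFixedPt.iterate hsym j).eq]
      exact (satForm_iterate_permModel_permForm hinj hcons M φ j).2 hMφ
    have hNψ := (h ⟨Set.MapsTo.iterate hclosed j hM, hNφ⟩).2
    refine ⟨hM, (satForm_iterate_permModel_permForm hinj hcons M _ j).1 ?_⟩
    rwa [← Function.iterate_succ_apply, iterate_permForm, hσk, permForm_id]
  · rintro h M ⟨hM, hMφ⟩
    have hσMφ : satForm (permModel σ M) φ := by
      rw [← hsym]
      exact (satForm_permModel_permForm hinj hcons M φ).2 hMφ
    exact ⟨hM, (satForm_permModel_permForm hinj hcons M ψ).1 (h ⟨hclosed M hM, hσMφ⟩).2⟩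

/-- symmetries preserve entailment: `φ ⊨_𝒞 ψ` iff `φ ⊨_𝒞 σ(ψ)`. -/
theorem entails_iff_entails_perm {Atom Mod : Type} [Countable Atom] [Countable Mod]
    [DecidableEq Atom] [DecidableEq Mod]
    {n₁ n₂ : ℕ} (φ : FormT Atom Mod n₁) (ψ : FormT Atom Mod n₂)
    (σ : Lit Atom → Lit Atom) (hbij : Function.Bijective σ) (hcons : Consistent σ)
    (hord : ∃ k : ℕ, 1 ≤ k ∧ σ^[k] = id)
    (hsym : permForm σ φ = φ)
    (𝒞 : Set (KModel Atom Mod)) (hclosed : ∀ M ∈ 𝒞, permModel σ M ∈ 𝒞) :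
    Entails 𝒞 φ ψ ↔ Entails 𝒞 φ (permForm σ ψ) :=
  entails_iff_entails_perm_general φ ψ σ hbij hcons hord hsym 𝒞 hclosed

end ModalSym
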